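/- arXiv:1909.12593 — 2 statements merged into one kernel-verified Lean document; each statement's English description precedes it below -/
import Mathlib

section
/- Coercivity-transfer inequality: let Υ be an N-function on ℝ^m with convex conjugate Υ*, let α ∈ (0,1], C ≥ 0, and let w, v, w₀, v₀ ∈ ℝ^m satisfy ⟨w, v⟩ ≥ α·(Υ*(w) + Υ(v)) − C. Then ⟨w − w₀, v − v₀⟩ ≥ (α/2)·(Υ*(w) + Υ(v)) − 2·Υ((2/α)·v₀) − 2·Υ*((2/α)·w₀) − C. -/
open scoped InnerProductSpace

/-- Coercivity-transfer inequality: a coercivity bound for `(w, v)` transfers, up to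
controllable error terms, to the shifted pair `(w - w₀, v - v₀)`. -/
theorem coercivity_transfer (m : ℕ) (hm : 1 ≤ m)
    (Υ : EuclideanSpace ℝ (Fin m) → ℝ)
    (hcont : Continuous Υ)
    (hconv : ConvexOn ℝ Set.univ Υ)
    (heven : ∀ z, Υ (-z) = Υ z)
    (hnonneg : ∀ z, 0 ≤ Υ z)
    (hzero : Filter.Tendsto (fun z => Υ z / ‖z‖)
      (nhdsWithin (0 : EuclideanSpace ℝ (Fin m)) {0}ᶜ) (nhds 0))
    (hinfty : Filter.Tendsto (fun z => Υ z / ‖z‖)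
      (Bornology.cobounded (EuclideanSpace ℝ (Fin m))) Filter.atTop)
    (α C : ℝ) (hα : α ∈ Set.Ioc (0 : ℝ) 1) (hC : 0 ≤ C)
    (w v w₀ v₀ : EuclideanSpace ℝ (Fin m))
    (hcoer : ⟪w, v⟫_ℝ ≥ α * ((⨆ y, (⟪w, y⟫_ℝ - Υ y)) + Υ v) - C) :
    ⟪w - w₀, v - v₀⟫_ℝ ≥
      α / 2 * ((⨆ y, (⟪w, y⟫_ℝ - Υ y)) + Υ v)
        - 2 * Υ ((2 / α) • v₀) - 2 * (⨆ y, (⟪(2 / α) • w₀, y⟫_ℝ - Υ y)) - C := by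
  obtain ⟨hα0, hα1⟩ := hα
  haveI : Nontrivial (EuclideanSpace ℝ (Fin m)) := by
    refine ⟨0, EuclideanSpace.single ⟨0, hm⟩ 1, ?_⟩
    intro h
    have := congrArg (fun x => x ⟨0, hm⟩) h.symm
    simp [EuclideanSpace.single] at this
  -- Υ 0 = 0
  have hΥ0 : Υ 0 = 0 := by
    have h1 : Filter.Tendsto Υ (nhdsWithin (0 : EuclideanSpace ℝ (Fin m)) {0}ᶜ) (nhds (Υ 0)) :=
      (hcont.tendsto 0).mono_left nhdsWithin_le_nhds
    have h2 : Filter.Tendsto Υ (nhdsWithin (0 : EuclideanSpace ℝ (Fin m)) {0}ᶜ) (nhds 0) := by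
      have hn : Filter.Tendsto (fun z : EuclideanSpace ℝ (Fin m) => ‖z‖)
          (nhdsWithin (0 : EuclideanSpace ℝ (Fin m)) {0}ᶜ) (nhds 0) := by
        simpa using (continuous_norm.tendsto (0 : EuclideanSpace ℝ (Fin m))).mono_left
          nhdsWithin_le_nhds
      have := hzero.mul hn
      rw [mul_zero] at this
      refine this.congr' ?_
      filter_upwards [self_mem_nhdsWithin] with z hz
      have : ‖z‖ ≠ 0 := by simpa using hz
      field_simp
    exact tendsto_nhds_unique h1 h2
  -- boundedness of the conjugate sup
  have hbdd : ∀ u : EuclideanSpace ℝ (Fin m),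
      BddAbove (Set.range fun y => ⟪u, y⟫_ℝ - Υ y) := by
    intro u
    have hev : ∀ᶠ z in Bornology.cobounded (EuclideanSpace ℝ (Fin m)), ‖u‖ ≤ Υ z / ‖z‖ :=
      hinfty.eventually_ge_atTop ‖u‖
    rw [(Filter.hasBasis_cobounded_norm).eventually_iff] at hev
    obtain ⟨R, -, hR⟩ := hev
    have hcontf : Continuous (fun y : EuclideanSpace ℝ (Fin m) => ⟪u, y⟫_ℝ - Υ y) :=
      (continuous_const.inner continuous_id).sub hcont
    obtain ⟨M, hM⟩ := ((isCompact_closedBall (0 : EuclideanSpace ℝ (Fin m))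
      (max R 1)).bddAbove_image hcontf.continuousOn)
    refine ⟨max M 0, ?_⟩
    rintro x ⟨y, rfl⟩
    by_cases hy : ‖y‖ ≤ max R 1
    · exact le_max_of_le_left (hM ⟨y, Metric.mem_closedBall.2 (by simpa using hy), rfl⟩)
    · push_neg at hy
      have hy0 : 0 < ‖y‖ := lt_of_le_of_lt (le_trans zero_le_one (le_max_right R 1)) hy
      have h1 : ‖u‖ ≤ Υ y / ‖y‖ :=
        hR (show y ∈ {x | R ≤ ‖x‖} from le_trans (le_max_left R 1) hy.le)
      have h2 : ‖u‖ * ‖y‖ ≤ Υ y := by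
        rw [le_div_iff₀ hy0] at h1; linarith
      have h3 : ⟪u, y⟫_ℝ ≤ ‖u‖ * ‖y‖ := real_inner_le_norm u y
      have : ⟪u, y⟫_ℝ - Υ y ≤ 0 := by linarith
      exact le_max_of_le_right this
  -- Young's inequality
  have young : ∀ (u y : EuclideanSpace ℝ (Fin m)), ⟪u, y⟫_ℝ ≤ (⨆ z, (⟪u, z⟫_ℝ - Υ z)) + Υ y := by
    intro u y
    have := le_ciSup (hbdd u) y
    linarith
  have youngneg : ∀ (u y : EuclideanSpace ℝ (Fin m)),
      -((⨆ z, (⟪u, z⟫_ℝ - Υ z)) + Υ y) ≤ ⟪u, y⟫_ℝ := by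
    intro u y
    have := young u (-y)
    rw [heven] at this
    have h2 : ⟪u, -y⟫_ℝ = -⟪u, y⟫_ℝ := by
      simp [inner_neg_right]
    linarith
  -- nonnegativity of the conjugate
  have hconjnn : ∀ u : EuclideanSpace ℝ (Fin m), 0 ≤ ⨆ y, (⟪u, y⟫_ℝ - Υ y) := by
    intro u
    have := le_ciSup (hbdd u) 0
    simp only [inner_zero_right, hΥ0, sub_zero, zero_sub] at this
    linarith [this]
  set A := ⨆ y, (⟪w, y⟫_ℝ - Υ y) with hA
  set A₀ := ⨆ y, (⟪(2 / α) • w₀, y⟫_ℝ - Υ y) with hA₀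
  set B := Υ v with hB
  set B₀ := Υ ((2 / α) • v₀) with hB₀
  have hA₀nn : 0 ≤ A₀ := hconjnn _
  have hAnn : 0 ≤ A := hconjnn _
  have hBnn : 0 ≤ B := hnonneg v
  have hB₀nn : 0 ≤ B₀ := hnonneg _
  have hαne : α ≠ 0 := ne_of_gt hα0
  -- cross term bounds
  have h1 : ⟪w, v₀⟫_ℝ ≤ α / 2 * (A + B₀) := by
    have h := young w ((2 / α) • v₀)
    have hsc : ⟪w, (2 / α) • v₀⟫_ℝ = (2 / α) * ⟪w, v₀⟫_ℝ := real_inner_smul_right w v₀ (2 / α)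
    rw [hsc, ← hA, ← hB₀] at h
    have key : α / 2 * ((2 / α) * ⟪w, v₀⟫_ℝ) = ⟪w, v₀⟫_ℝ := by field_simp
    have := mul_le_mul_of_nonneg_left h (le_of_lt (show (0:ℝ) < α / 2 by positivity))
    linarith [this, key]
  have h2 : ⟪w₀, v⟫_ℝ ≤ α / 2 * (A₀ + B) := by
    have h := young ((2 / α) • w₀) v
    have hsc : ⟪(2 / α) • w₀, v⟫_ℝ = (2 / α) * ⟪w₀, v⟫_ℝ := real_inner_smul_left w₀ v (2 / α)
    rw [hsc, ← hA₀, ← hB] at h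
    have key : α / 2 * ((2 / α) * ⟪w₀, v⟫_ℝ) = ⟪w₀, v⟫_ℝ := by field_simp
    have := mul_le_mul_of_nonneg_left h (le_of_lt (show (0:ℝ) < α / 2 by positivity))
    linarith [this, key]
  have h3 : -(α^2 / 4 * (A₀ + B₀)) ≤ ⟪w₀, v₀⟫_ℝ := by
    have h := youngneg ((2 / α) • w₀) ((2 / α) • v₀)
    have hsc : ⟪(2 / α) • w₀, (2 / α) • v₀⟫_ℝ = (2 / α) * ((2 / α) * ⟪w₀, v₀⟫_ℝ) := by
      rw [real_inner_smul_left, real_inner_smul_right]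
    rw [hsc, ← hA₀, ← hB₀] at h
    have key : α^2 / 4 * ((2 / α) * ((2 / α) * ⟪w₀, v₀⟫_ℝ)) = ⟪w₀, v₀⟫_ℝ := by
      field_simp; ring
    have := mul_le_mul_of_nonneg_left h (show (0:ℝ) ≤ α^2 / 4 by positivity)
    linarith [this, key]
  have hexp : ⟪w - w₀, v - v₀⟫_ℝ = ⟪w, v⟫_ℝ - ⟪w, v₀⟫_ℝ - ⟪w₀, v⟫_ℝ + ⟪w₀, v₀⟫_ℝ := by
    simp [inner_sub_left, inner_sub_right]; ring
  rw [hexp, ge_iff_le]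
  have hcoer' : α * (A + B) - C ≤ ⟪w, v⟫_ℝ := hcoer
  have hα2 : α^2 ≤ 1 := by nlinarith
  nlinarith [mul_nonneg (sub_nonneg.2 hα1) hA₀nn, mul_nonneg (sub_nonneg.2 hα1) hB₀nn,
    mul_nonneg (sub_nonneg.2 hα2) hA₀nn, mul_nonneg (sub_nonneg.2 hα2) hB₀nn]
end

section
/- Fenchel–Young equality for the Butler–Volmer law: with Ψ(z) = exp(‖z‖) − ‖z‖ − 1, its convex conjugate Ψ*(w) := sup_{y ∈ ℝ^m} (⟨w, y⟩ − Ψ(y)), and b(z) = ((exp(‖z‖) − 1)/‖z‖)·z for z ≠ 0, b(0) = 0, one has for every z ∈ ℝ^m: ⟨b(z), z⟩ = Ψ(z) + Ψ*(b(z)). In particular b satisfies the coercivity condition ⟨b(z), z⟩ ≥ α·(Ψ*(b(z)) + Ψ(z)) − C with α = 1 and C = 0. -/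
open scoped InnerProductSpace

private lemma bv_key (r s : ℝ) :
    (Real.exp r - 1) * s - (Real.exp s - s - 1) ≤
      (Real.exp r - 1) * r - (Real.exp r - r - 1) := by
  have h := Real.add_one_le_exp (s - r)
  have h2 : Real.exp (s - r) * Real.exp r = Real.exp s := by
    rw [← Real.exp_add]; ring_nf
  nlinarith [Real.exp_pos r]

/-- Fenchel–Young equality for the Butler–Volmer law: with
`Ψ(z) = exp ‖z‖ - ‖z‖ - 1` and `b(z) = ((exp ‖z‖ - 1) / ‖z‖) • z`, `b 0 = 0`, one has
`⟪b z, z⟫ = Ψ z + Ψ* (b z)`; in particular `b` is coercive with `α = 1`, `C = 0`. -/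
theorem fenchel_young_butler_volmer (m : ℕ) (hm : 1 ≤ m)
    (b : EuclideanSpace ℝ (Fin m) → EuclideanSpace ℝ (Fin m))
    (hdef : ∀ z : EuclideanSpace ℝ (Fin m), z ≠ 0 → b z = ((Real.exp ‖z‖ - 1) / ‖z‖) • z)
    (hzero : b 0 = 0) :
    ∀ z : EuclideanSpace ℝ (Fin m),
      ⟪b z, z⟫_ℝ = (Real.exp ‖z‖ - ‖z‖ - 1) +
        (⨆ y : EuclideanSpace ℝ (Fin m), (⟪b z, y⟫_ℝ - (Real.exp ‖y‖ - ‖y‖ - 1))) ∧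
      ⟪b z, z⟫_ℝ ≥ 1 * ((⨆ y : EuclideanSpace ℝ (Fin m),
        (⟪b z, y⟫_ℝ - (Real.exp ‖y‖ - ‖y‖ - 1))) + (Real.exp ‖z‖ - ‖z‖ - 1)) - 0 := by
  intro z
  set r := ‖z‖ with hr
  -- upper bound for each y
  have hub : ∀ y : EuclideanSpace ℝ (Fin m),
      ⟪b z, y⟫_ℝ - (Real.exp ‖y‖ - ‖y‖ - 1) ≤
        (Real.exp r - 1) * r - (Real.exp r - r - 1) := by
    intro y
    have hiy : ⟪b z, y⟫_ℝ ≤ (Real.exp r - 1) * ‖y‖ := by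
      by_cases hz : z = 0
      · simp [hz, hzero, hr]
      · rw [hdef z hz, real_inner_smul_left]
        have hr0 : 0 < r := by simpa [hr] using norm_pos_iff.mpr hz
        have hc : 0 ≤ (Real.exp r - 1) / r := by
          have h1 : (1:ℝ) ≤ Real.exp r := by
            have := Real.add_one_le_exp r; linarith [hr0.le]
          exact div_nonneg (by linarith) hr0.le
        have hin : ⟪z, y⟫_ℝ ≤ r * ‖y‖ := by
          simpa [hr] using real_inner_le_norm z y
        calc (Real.exp r - 1) / r * ⟪z, y⟫_ℝ ≤ (Real.exp r - 1) / r * (r * ‖y‖) :=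
              mul_le_mul_of_nonneg_left hin hc
          _ = (Real.exp r - 1) * ‖y‖ := by field_simp
    have := bv_key r ‖y‖
    linarith
  have hbdd : BddAbove (Set.range fun y : EuclideanSpace ℝ (Fin m) =>
      ⟪b z, y⟫_ℝ - (Real.exp ‖y‖ - ‖y‖ - 1)) := by
    exact ⟨(Real.exp r - 1) * r - (Real.exp r - r - 1), by rintro x ⟨y, rfl⟩; exact hub y⟩
  have hinner : ⟪b z, z⟫_ℝ = (Real.exp r - 1) * r := by
    by_cases hz : z = 0
    · simp [hz, hzero, hr]
    · rw [hdef z hz, real_inner_smul_left, real_inner_self_eq_norm_sq]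
      have hr0 : r ≠ 0 := by simpa [hr] using norm_ne_zero_iff.mpr hz
      field_simp
      ring
  have hsup : (⨆ y : EuclideanSpace ℝ (Fin m),
      (⟪b z, y⟫_ℝ - (Real.exp ‖y‖ - ‖y‖ - 1))) =
        (Real.exp r - 1) * r - (Real.exp r - r - 1) := by
    apply le_antisymm
    · exact ciSup_le hub
    · have := le_ciSup hbdd z
      rw [hinner] at this
      simpa [hr] using this
  constructor
  · rw [hsup, hinner]; ring
  · rw [hsup, hinner]; ring_nf; simp
end
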